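/- Let su(2) have basis (X₁,X₂,X₃) with [X₁,X₂]=X₃, [X₂,X₃]=X₁, [X₃,X₁]=X₂, source metric diag(λ₁,μ₁,ν₁) and target metric diag(λ₂,μ₂,ν₂). The rotation ξ₁(a): X₁↦X₁, X₂↦cos(a)X₂−sin(a)X₃, X₃↦sin(a)X₂+cos(a)X₃ has tension field τ(ξ₁(a)) = −(sin(a)cos(a)(μ₂−ν₂)(μ₁−ν₁)/(λ₂μ₁ν₁)) X₁. -/

import Mathlib

/-!
For a diagonal metric `diag(d₀, d₁, d₂)` on `su(2)`, putting `v = u` in the Koszul formula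
kills the term `[u, u]` and leaves `B_u u = ∑ᵢ ⟨[eᵢ, u], u⟩ / dᵢ · eᵢ`. The rotation `ξ₁(a)`
sends the first frame vector into the `X₁`-axis, where `B` vanishes, and the other two into the
`(X₂, X₃)`-plane, where only the `X₁`-component survives; summing `u₂u₃` over the rotated
frame vectors gives `sin a cos a (1/ν₁ - 1/μ₁)`.
-/

noncomputable section

/-- Diagonal inner product on `ℝ³` with diagonal `d`. -/
def ip (d : Fin 3 → ℝ) (u v : Fin 3 → ℝ) : ℝ :=
  d 0 * u 0 * v 0 + d 1 * u 1 * v 1 + d 2 * u 2 * v 2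

/-- The bracket of `su(2)`: `[X₁,X₂]=X₃`, `[X₂,X₃]=X₁`, `[X₃,X₁]=X₂`. -/
def brSU (u v : Fin 3 → ℝ) : Fin 3 → ℝ :=
  ![u 1 * v 2 - u 2 * v 1, u 2 * v 0 - u 0 * v 2, u 0 * v 1 - u 1 * v 0]

def IsLeviCivitaProduct (d : Fin 3 → ℝ) (B : (Fin 3 → ℝ) → (Fin 3 → ℝ) → (Fin 3 → ℝ)) : Prop :=
  ∀ u v w, 2 * ip d (B u v) w = ip d (brSU u v) w + ip d (brSU w u) v + ip d (brSU w v) u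

theorem brSU_self (u : Fin 3 → ℝ) : brSU u u = 0 := by
  funext i
  fin_cases i <;> simp [brSU] <;> ring

theorem ip_zero_left (d v : Fin 3 → ℝ) : ip d 0 v = 0 := by
  simp [ip]

theorem ip_single_right (d u : Fin 3 → ℝ) (i : Fin 3) : ip d u (Pi.single i 1) = d i * u i := by
  fin_cases i <;> simp [ip]

namespace IsLeviCivitaProduct

variable {d : Fin 3 → ℝ} {B : (Fin 3 → ℝ) → (Fin 3 → ℝ) → (Fin 3 → ℝ)}

theorem ip_apply_self (hB : IsLeviCivitaProduct d B) (u w : Fin 3 → ℝ) :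
    ip d (B u u) w = ip d (brSU w u) u := by
  have := hB u u w
  rw [brSU_self, ip_zero_left] at this
  linarith

theorem apply_self_apply (hB : IsLeviCivitaProduct d B) (hd : ∀ i, d i ≠ 0)
    (u : Fin 3 → ℝ) (i : Fin 3) : B u u i = ip d (brSU (Pi.single i 1) u) u / d i := by
  rw [← hB.ip_apply_self, ip_single_right, mul_div_cancel_left₀ _ (hd i)]

theorem apply_self (hB : IsLeviCivitaProduct d B) (hd : ∀ i, d i ≠ 0) (u : Fin 3 → ℝ) :
    B u u = ![u 1 * u 2 * (d 2 - d 1) / d 0, u 0 * u 2 * (d 0 - d 2) / d 1,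
      u 0 * u 1 * (d 1 - d 0) / d 2] := by
  funext i
  rw [hB.apply_self_apply hd]
  fin_cases i <;> simp [ip, brSU] <;> ring

end IsLeviCivitaProduct

theorem su2_rotation_tension_field_general
    (l1 μ1 ν1 l2 μ2 ν2 : ℝ)
    (hμ1 : 0 < μ1) (hν1 : 0 < ν1)
    (hl2 : 0 < l2) (hμ2 : 0 < μ2) (hν2 : 0 < ν2)
    (a : ℝ)
    (ξ : (Fin 3 → ℝ) → (Fin 3 → ℝ))
    (hξ : ξ = fun u => ![u 0, Real.cos a * u 1 + Real.sin a * u 2,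
      -Real.sin a * u 1 + Real.cos a * u 2])
    (B : (Fin 3 → ℝ) → (Fin 3 → ℝ) → (Fin 3 → ℝ))
    -- B is the Levi-Civita product of the target metric diag(λ₂,μ₂,ν₂)
    (hB : ∀ u v w, 2 * ip ![l2, μ2, ν2] (B u v) w =
      ip ![l2, μ2, ν2] (brSU u v) w + ip ![l2, μ2, ν2] (brSU w u) v
        + ip ![l2, μ2, ν2] (brSU w v) u)
    (τ : Fin 3 → ℝ)
    -- τ(ξ) = Σ_i B_{ξ(e_i)} ξ(e_i) for the orthonormal basis of diag(λ₁,μ₁,ν₁)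
    (hτ : τ = B (ξ ![Real.sqrt (1/l1), 0, 0]) (ξ ![Real.sqrt (1/l1), 0, 0])
            + B (ξ ![0, Real.sqrt (1/μ1), 0]) (ξ ![0, Real.sqrt (1/μ1), 0])
            + B (ξ ![0, 0, Real.sqrt (1/ν1)]) (ξ ![0, 0, Real.sqrt (1/ν1)])) :
    τ = ![-(Real.sin a * Real.cos a * (μ2 - ν2) * (μ1 - ν1) / (l2 * μ1 * ν1)), 0, 0] := by
  have hd : ∀ i, ![l2, μ2, ν2] i ≠ 0 := by
    intro i
    fin_cases i <;> simp [hl2.ne', hμ2.ne', hν2.ne']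
  have hBuu := IsLeviCivitaProduct.apply_self hB hd
  have hq2 : Real.sqrt (1 / μ1) ^ 2 = 1 / μ1 := Real.sq_sqrt (by positivity)
  have hq3 : Real.sqrt (1 / ν1) ^ 2 = 1 / ν1 := Real.sq_sqrt (by positivity)
  generalize Real.sqrt (1 / μ1) = q2 at hq2 hτ
  generalize Real.sqrt (1 / ν1) = q3 at hq3 hτ
  have hτ_eq : τ = ![Real.sin a * Real.cos a * (ν2 - μ2) / l2 * (q3 ^ 2 - q2 ^ 2), 0, 0] := by
    subst hξ hτ
    funext i
    fin_cases i <;> simp [hBuu]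
    ring
  have hgap : q3 ^ 2 - q2 ^ 2 = (μ1 - ν1) / (μ1 * ν1) := by
    rw [hq2, hq3]
    field_simp
  rw [hτ_eq, hgap]
  congr 1
  field_simp
  ring

/-- For `su(2)` with metrics `diag(λ₁,μ₁,ν₁)`, `diag(λ₂,μ₂,ν₂)`, the rotation
`ξ₁(a): X₁↦X₁, X₂↦cos(a)X₂−sin(a)X₃, X₃↦sin(a)X₂+cos(a)X₃` has tension field
`τ = −(sin(a)cos(a)(μ₂−ν₂)(μ₁−ν₁)/(λ₂μ₁ν₁)) X₁`. -/
theorem su2_rotation_tension_field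
    (l1 μ1 ν1 l2 μ2 ν2 : ℝ)
    (hl1 : 0 < l1) (hμ1 : 0 < μ1) (hν1 : 0 < ν1)
    (hl2 : 0 < l2) (hμ2 : 0 < μ2) (hν2 : 0 < ν2)
    (a : ℝ)
    (ξ : (Fin 3 → ℝ) → (Fin 3 → ℝ))
    (hξ : ξ = fun u => ![u 0, Real.cos a * u 1 + Real.sin a * u 2,
      -Real.sin a * u 1 + Real.cos a * u 2])
    (B : (Fin 3 → ℝ) → (Fin 3 → ℝ) → (Fin 3 → ℝ))
    -- B is the Levi-Civita product of the target metric diag(λ₂,μ₂,ν₂)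
    (hB : ∀ u v w, 2 * ip ![l2, μ2, ν2] (B u v) w =
      ip ![l2, μ2, ν2] (brSU u v) w + ip ![l2, μ2, ν2] (brSU w u) v
        + ip ![l2, μ2, ν2] (brSU w v) u)
    (τ : Fin 3 → ℝ)
    -- τ(ξ) = Σ_i B_{ξ(e_i)} ξ(e_i) for the orthonormal basis of diag(λ₁,μ₁,ν₁)
    (hτ : τ = B (ξ ![Real.sqrt (1/l1), 0, 0]) (ξ ![Real.sqrt (1/l1), 0, 0])
            + B (ξ ![0, Real.sqrt (1/μ1), 0]) (ξ ![0, Real.sqrt (1/μ1), 0])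
            + B (ξ ![0, 0, Real.sqrt (1/ν1)]) (ξ ![0, 0, Real.sqrt (1/ν1)])) :
    τ = ![-(Real.sin a * Real.cos a * (μ2 - ν2) * (μ1 - ν1) / (l2 * μ1 * ν1)), 0, 0] :=
  su2_rotation_tension_field_general l1 μ1 ν1 l2 μ2 ν2 hμ1 hν1 hl2 hμ2 hν2 a ξ hξ B hB τ hτ
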